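/- The encoding of the ring-to-star rule admits spurious rewritings on an 8-cycle: with A_i as in the ring-to-star example (contracts a_i(n,m,x) = ( f_{i⊞1}(x,m) ∧ s_{i⊟1}(x,n) ) ↠ ( f_i(x,n) ∧ s_i(x,m) ), indices modulo 4), and pairwise distinct names n_1,…,n_8, the length-8 loop P = A_1(n_1,n_2) | A_2(n_2,n_3) | A_3(n_3,n_4) | A_4(n_4,n_5) | A_1(n_5,n_6) | A_2(n_6,n_7) | A_3(n_7,n_8) | A_4(n_8,n_1) can perform a ↣-transition, in which all eight session variables are fused to a single fresh name. -/

import Mathlib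

namespace Contracts

/-! ### Names, variables, substitutions -/

abbrev Name : Type := ℕ
abbrev Var : Type := ℕ
/-- Atoms: either names (`inl`) or variables (`inr`). -/
abbrev Atom : Type := Name ⊕ Var

/-- A substitution maps variables to atoms (names or variables). -/
abbrev Subst : Type := Var → Atom

def substAtom (σ : Subst) : Atom → Atom
  | .inl n => .inl n
  | .inr x => σ x

/-- The fusion `{x̄ → n}` replacing each variable in `V` by the name `n`. -/
def fuseSubst (V : Finset Var) (n : Name) : Subst := fun y =>
  if y ∈ V then .inl n else .inr y

/-- The substitution `{n/x}`. -/
def singleSubst (x : Var) (n : Name) : Subst := fun y =>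
  if y = x then .inl n else .inr y

/-- Transposition of two atoms (for alpha conversion). -/
def swapAtom (a b : Atom) : Atom → Atom := fun c =>
  if c = a then b else if c = b then a else c

/-! ### Constraint systems (Def 2.1), with substitution/renaming/free-atom structure -/

structure ConstraintSystem where
  D : Type
  bot : D
  entails : Set D → D → Prop
  subst : Subst → D → D
  ren : (Atom → Atom) → D → D
  fv : D → Set Atom

namespace ConstraintSystem

/-- The laws (i)-(iii) of Def 2.1. -/
def Lawful (CS : ConstraintSystem) : Prop :=
  (∀ (C : Set CS.D) (c : CS.D), c ∈ C → CS.entails C c) ∧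
  (∀ (C C' : Set CS.D) (c : CS.D),
      (∀ c' ∈ C', CS.entails C c') → CS.entails C' c → CS.entails C c) ∧
  (∀ (C : Set CS.D) (c : CS.D), CS.entails C CS.bot → CS.entails C c)

def substSet (CS : ConstraintSystem) (σ : Subst) (C : Set CS.D) : Set CS.D :=
  CS.subst σ '' C

/-- Minimal fusion (Def 2.4): `C ⊢min_{ {V→n} } c`. -/
def MinFusion (CS : ConstraintSystem) (C : Set CS.D) (V : Finset Var) (n : Name)
    (c : CS.D) : Prop :=
  CS.entails (CS.substSet (fuseSubst V n) C) (CS.subst (fuseSubst V n) c) ∧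
  ∀ W : Finset Var, W ⊂ V →
    ¬ CS.entails (CS.substSet (fuseSubst W n) C) (CS.subst (fuseSubst W n) c)

/-- Local minimal fusion (Def 2.6): `C ⊢loc_σ c` iff `∃ C' ⊆ C, C' ⊢min_σ c`. -/
def LocMinFusion (CS : ConstraintSystem) (C : Set CS.D) (V : Finset Var) (n : Name)
    (c : CS.D) : Prop :=
  ∃ C' ⊆ C, CS.MinFusion C' V n c

end ConstraintSystem

/-! ### Process syntax -/

inductive Prefix (D : Type) : Type where
  | tau
  | tell (c : D)
  | check (c : D)
  | ask (c : D)
  | join (x : Var) (c : D)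
  | fuse (x : Var) (c : D)

/-- Processes.  Sums `Σ πᵢ.Pᵢ` are built from `nil` (the empty sum `0`), guarded
processes `act π P` (i.e. `π.P`) and binary `choice` (`+`). -/
inductive Proc (D : Type) : Type where
  | nil
  | con (c : D)
  | act (π : Prefix D) (P : Proc D)
  | choice (P Q : Proc D)
  | par (P Q : Proc D)
  | delim (a : Atom) (P : Proc D)
  | const (X : ℕ) (args : List Atom)

/-- Substitution on prefixes; note `(fuse_x c){n/x} = (join_x c){n/x} = ask (c{n/x})`. -/
def Prefix.substP (CS : ConstraintSystem) (σ : Subst) : Prefix CS.D → Prefix CS.D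
  | .tau => .tau
  | .tell c => .tell (CS.subst σ c)
  | .check c => .check (CS.subst σ c)
  | .ask c => .ask (CS.subst σ c)
  | .join x c =>
    match σ x with
    | .inl _ => .ask (CS.subst σ c)
    | .inr y => .join y (CS.subst σ c)
  | .fuse x c =>
    match σ x with
    | .inl _ => .ask (CS.subst σ c)
    | .inr y => .fuse y (CS.subst σ c)

/-- Mask a substitution on a bound atom. -/
def maskAtom (σ : Subst) : Atom → Subst
  | .inl _ => σ
  | .inr y => fun z => if z = y then .inr z else σ z

def Proc.subst (CS : ConstraintSystem) (σ : Subst) : Proc CS.D → Proc CS.D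
  | .nil => .nil
  | .con c => .con (CS.subst σ c)
  | .act π P => .act (π.substP CS σ) (P.subst CS σ)
  | .choice P Q => .choice (P.subst CS σ) (Q.subst CS σ)
  | .par P Q => .par (P.subst CS σ) (Q.subst CS σ)
  | .delim a P => .delim a (P.subst CS (maskAtom σ a))
  | .const X args => .const X (args.map (substAtom σ))

/-- Renaming of all atom occurrences (including binders), used for alpha conversion. -/
def Prefix.renP (CS : ConstraintSystem) (f : Atom → Atom) : Prefix CS.D → Prefix CS.D
  | .tau => .tau
  | .tell c => .tell (CS.ren f c)
  | .check c => .check (CS.ren f c)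
  | .ask c => .ask (CS.ren f c)
  | .join x c =>
    match f (.inr x) with
    | .inl _ => .ask (CS.ren f c)
    | .inr y => .join y (CS.ren f c)
  | .fuse x c =>
    match f (.inr x) with
    | .inl _ => .ask (CS.ren f c)
    | .inr y => .fuse y (CS.ren f c)

def Proc.ren (CS : ConstraintSystem) (f : Atom → Atom) : Proc CS.D → Proc CS.D
  | .nil => .nil
  | .con c => .con (CS.ren f c)
  | .act π P => .act (π.renP CS f) (P.ren CS f)
  | .choice P Q => .choice (P.ren CS f) (Q.ren CS f)
  | .par P Q => .par (P.ren CS f) (Q.ren CS f)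
  | .delim a P => .delim (f a) (P.ren CS f)
  | .const X args => .const X (args.map f)

def Prefix.fvP (CS : ConstraintSystem) : Prefix CS.D → Set Atom
  | .tau => ∅
  | .tell c => CS.fv c
  | .check c => CS.fv c
  | .ask c => CS.fv c
  | .join x c => insert (Sum.inr x) (CS.fv c)
  | .fuse x c => insert (Sum.inr x) (CS.fv c)

/-- Free atoms of a process. -/
def Proc.free (CS : ConstraintSystem) : Proc CS.D → Set Atom
  | .nil => ∅
  | .con c => CS.fv c
  | .act π P => π.fvP CS ∪ P.free CS
  | .choice P Q => P.free CS ∪ Q.free CS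
  | .par P Q => P.free CS ∪ Q.free CS
  | .delim a P => P.free CS \ {a}
  | .const _ args => {a | a ∈ args}

/-- All atoms of a process (including bound ones). -/
def Proc.atoms (CS : ConstraintSystem) : Proc CS.D → Set Atom
  | .nil => ∅
  | .con c => CS.fv c
  | .act π P => π.fvP CS ∪ P.atoms CS
  | .choice P Q => P.atoms CS ∪ Q.atoms CS
  | .par P Q => P.atoms CS ∪ Q.atoms CS
  | .delim a P => insert a (P.atoms CS)
  | .const _ args => {a | a ∈ args}

/-- Iterated delimitation `(a₁)…(aₖ)P`. -/
def delims {D : Type} (l : List Atom) (P : Proc D) : Proc D := l.foldr Proc.delim P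

/-- Parallel composition of a list of processes. -/
def parList {D : Type} (l : List (Proc D)) : Proc D := l.foldr Proc.par Proc.nil

/-- A set `C = {c₁, c₂, …}` of constraints used as a process `c₁ | c₂ | ⋯`. -/
def conList {D : Type} (C : List D) : Proc D := parList (C.map Proc.con)

/-- Environments of defining equations `X(x̄) ≐ P`. -/
abbrev Env (D : Type) : Type := ℕ → List Var × Proc D

def mkSubst (params : List Var) (args : List Atom) : Subst := fun z =>
  match params.findIdx? (fun w => w == z) with
  | some i => args.getD i (.inr z)
  | none => .inr z

def unfoldConst (CS : ConstraintSystem) (env : Env CS.D) (X : ℕ) (args : List Atom) :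
    Proc CS.D :=
  ((env X).2).subst CS (mkSubst (env X).1 args)

/-- Sums `Σ πᵢ.Pᵢ`. -/
def IsSum {D : Type} : Proc D → Prop
  | .nil => True
  | .act _ _ => True
  | .choice P Q => IsSum P ∧ IsSum Q
  | _ => False

/-- A process free from active (top-level) constraints. -/
def NoActiveCon {D : Type} : Proc D → Prop
  | .con _ => False
  | .par P Q => NoActiveCon P ∧ NoActiveCon Q
  | .delim _ P => NoActiveCon P
  | _ => True

/-- Every occurrence of a constant is guarded (behind a prefix). -/
def Guarded {D : Type} : Proc D → Prop
  | .const _ _ => False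
  | .act _ _ => True
  | .choice P Q => Guarded P ∧ Guarded Q
  | .par P Q => Guarded P ∧ Guarded Q
  | .delim _ P => Guarded P
  | _ => True

/-! ### Alpha conversion and structural equivalence -/

inductive AlphaEq (CS : ConstraintSystem) : Proc CS.D → Proc CS.D → Prop where
  | refl (P) : AlphaEq CS P P
  | symm {P Q} (h : AlphaEq CS P Q) : AlphaEq CS Q P
  | trans {P Q R} (h1 : AlphaEq CS P Q) (h2 : AlphaEq CS Q R) : AlphaEq CS P R
  | act {π P Q} (h : AlphaEq CS P Q) : AlphaEq CS (.act π P) (.act π Q)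
  | choice {P P' Q Q'} (h1 : AlphaEq CS P P') (h2 : AlphaEq CS Q Q') :
      AlphaEq CS (.choice P Q) (.choice P' Q')
  | par {P P' Q Q'} (h1 : AlphaEq CS P P') (h2 : AlphaEq CS Q Q') :
      AlphaEq CS (.par P Q) (.par P' Q')
  | delim {a P Q} (h : AlphaEq CS P Q) : AlphaEq CS (.delim a P) (.delim a Q)
  | rename {a b : Atom} {P : Proc CS.D} (h : b ∉ P.atoms CS) :
      AlphaEq CS (.delim a P) (.delim b (P.ren CS (swapAtom a b)))

/-- Structural equivalence `≡` (Sect. 2), on processes taken up to alpha-conversion. -/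
inductive StructEq (CS : ConstraintSystem) (env : Env CS.D) :
    Proc CS.D → Proc CS.D → Prop where
  | refl (P) : StructEq CS env P P
  | symm {P Q} (h : StructEq CS env P Q) : StructEq CS env Q P
  | trans {P Q R} (h1 : StructEq CS env P Q) (h2 : StructEq CS env Q R) :
      StructEq CS env P R
  | alpha {P Q} (h : AlphaEq CS P Q) : StructEq CS env P Q
  | parNil (P) : StructEq CS env (.par P .nil) P
  | parComm (P Q) : StructEq CS env (.par P Q) (.par Q P)
  | parAssoc (P Q R) : StructEq CS env (.par (.par P Q) R) (.par P (.par Q R))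
  | choiceNil (P) : StructEq CS env (.choice P .nil) P
  | choiceComm (P Q) : StructEq CS env (.choice P Q) (.choice Q P)
  | choiceAssoc (P Q R) :
      StructEq CS env (.choice (.choice P Q) R) (.choice P (.choice Q R))
  | scope {a : Atom} {P Q : Proc CS.D} (h : a ∉ P.free CS) :
      StructEq CS env (.delim a (.par P Q)) (.par P (.delim a Q))
  | delimSwap (a b : Atom) (P) :
      StructEq CS env (.delim a (.delim b P)) (.delim b (.delim a P))
  | unfold (X : ℕ) (args : List Atom) :
      StructEq CS env (.const X args) (unfoldConst CS env X args)
  | actCong {π P Q} (h : StructEq CS env P Q) :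
      StructEq CS env (.act π P) (.act π Q)
  | choiceCong {P P' Q Q'} (h1 : StructEq CS env P P') (h2 : StructEq CS env Q Q') :
      StructEq CS env (.choice P Q) (.choice P' Q')
  | parCong {P P' Q Q'} (h1 : StructEq CS env P P') (h2 : StructEq CS env Q Q') :
      StructEq CS env (.par P Q) (.par P' Q')
  | delimCong {a P Q} (h : StructEq CS env P Q) :
      StructEq CS env (.delim a P) (.delim a Q)

/-! ### Reduction semantics (Fig. 1) -/

inductive Red (CS : ConstraintSystem) (env : Env CS.D) : Proc CS.D → Proc CS.D → Prop where
  | tauR (as : List Atom) (P Q R : Proc CS.D) :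
      Red CS env (delims as (.par (.choice (.act .tau P) Q) R)) (delims as (.par P R))
  | tellR (as : List Atom) (c : CS.D) (P Q R : Proc CS.D) :
      Red CS env (delims as (.par (.choice (.act (.tell c) P) Q) R))
        (delims as (.par (.con c) (.par P R)))
  | askR (as : List Atom) (C : List CS.D) (c : CS.D) (P Q R : Proc CS.D)
      (h : CS.entails {d | d ∈ C} c) :
      Red CS env (delims as (.par (conList C) (.par (.choice (.act (.ask c) P) Q) R)))
        (delims as (.par (conList C) (.par P R)))
  | checkR (as : List Atom) (C : List CS.D) (c : CS.D) (P Q R : Proc CS.D)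
      (h1 : ¬ CS.entails (insert c {d | d ∈ C}) CS.bot) (h2 : NoActiveCon R) :
      Red CS env (delims as (.par (conList C) (.par (.choice (.act (.check c) P) Q) R)))
        (delims as (.par (conList C) (.par P R)))
  | fuseR (as : List Atom) (vs : Finset Var) (x : Var) (n : Name) (C : List CS.D)
      (c : CS.D) (P Q R : Proc CS.D) (hx : x ∈ vs)
      (hfresh : (Sum.inl n : Atom) ∉ P.free CS ∧ (Sum.inl n : Atom) ∉ Q.free CS ∧
        (Sum.inl n : Atom) ∉ R.free CS ∧ (∀ d ∈ C, (Sum.inl n : Atom) ∉ CS.fv d) ∧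
        (Sum.inl n : Atom) ∉ CS.fv c ∧ (Sum.inl n : Atom) ∉ as)
      (hmin : CS.MinFusion {d | d ∈ C} vs n c) :
      Red CS env
        (delims (vs.toList.map (Sum.inr : Var → Atom) ++ as)
          (.par (conList C) (.par (.choice (.act (.fuse x c) P) Q) R)))
        (delims (Sum.inl n :: as)
          ((Proc.par (conList C) (.par P R)).subst CS (fuseSubst vs n)))
  | joinR (as : List Atom) (x : Var) (n : Name) (C : List CS.D) (c : CS.D)
      (P Q R : Proc CS.D)
      (h : CS.entails (CS.substSet (singleSubst x n) {d | d ∈ C})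
             (CS.subst (singleSubst x n) c)) :
      Red CS env
        (delims (Sum.inr x :: Sum.inl n :: as)
          (.par (conList C) (.par (.choice (.act (.join x c) P) Q) R)))
        (delims (Sum.inl n :: as)
          ((Proc.par (conList C) (.par P R)).subst CS (singleSubst x n)))
  | structR {P P' Q Q' : Proc CS.D} (h1 : StructEq CS env P P')
      (h2 : Red CS env P' Q') (h3 : StructEq CS env Q' Q) : Red CS env P Q

/-! ### Actions and the labelled transition semantics (Fig. 2) -/

inductive BAct (D : Type) where
  | tau
  | constr (C : Set D)
  | askA (C : Set D) (c : D)
  | fuseA (C : Set D) (x : Var) (c : D)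
  | joinA (C : Set D) (x : Var) (c : D)
  | checkA (C : Set D)

/-- Actions `α ::= (ā) β` where `β` is a base action; the order of the
delimitations `(ā)` is neglected, as in the paper. -/
structure Act (D : Type) where
  binders : Finset Atom
  base : BAct D

def setFv (CS : ConstraintSystem) (C : Set CS.D) : Set Atom := ⋃ d ∈ C, CS.fv d

def BAct.fa (CS : ConstraintSystem) : BAct CS.D → Set Atom
  | .tau => ∅
  | .constr C => setFv CS C
  | .askA C c => setFv CS C ∪ CS.fv c
  | .fuseA C x c => setFv CS C ∪ CS.fv c ∪ {Sum.inr x}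
  | .joinA C x c => setFv CS C ∪ CS.fv c ∪ {Sum.inr x}
  | .checkA C => setFv CS C

def Act.fa (CS : ConstraintSystem) (α : Act CS.D) : Set Atom :=
  α.base.fa CS ∪ ↑α.binders

/-- No-capture side condition of the `Par*` rules: `ā` is fresh in `b̄`, the
tentative base action and `Q'`, while `b̄` is fresh in `C` and `P'`. -/
def SideCond (CS : ConstraintSystem) (A B : Finset Atom) (C : Set CS.D)
    (β : BAct CS.D) (P' Q' : Proc CS.D) : Prop :=
  (∀ a ∈ A, a ∉ B ∧ a ∉ β.fa CS ∧ a ∉ Q'.free CS) ∧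
  (∀ b ∈ B, b ∉ setFv CS C ∧ b ∉ P'.free CS)

inductive LTS (CS : ConstraintSystem) (env : Env CS.D) :
    Proc CS.D → Act CS.D → Proc CS.D → Prop where
  | tauA {P} : LTS CS env (.act .tau P) ⟨∅, .tau⟩ P
  | tellA {c P} : LTS CS env (.act (.tell c) P) ⟨∅, .tau⟩ (.par (.con c) P)
  | askA {c P} : LTS CS env (.act (.ask c) P) ⟨∅, .askA ∅ c⟩ P
  | checkA {c P} : LTS CS env (.act (.check c) P) ⟨∅, .checkA {c}⟩ P
  | fuseA {x c P} : LTS CS env (.act (.fuse x c) P) ⟨∅, .fuseA ∅ x c⟩ P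
  | joinA {x c P} : LTS CS env (.act (.join x c) P) ⟨∅, .joinA ∅ x c⟩ P
  | constrA {u} : LTS CS env (.con u) ⟨∅, .constr {u}⟩ (.con u)
  | idleSum {P} (h : IsSum P) : LTS CS env P ⟨∅, .constr ∅⟩ P
  | parConstr {P Q P' Q' : Proc CS.D} {A B : Finset Atom} {C C' : Set CS.D}
      (h1 : LTS CS env P ⟨A, .constr C⟩ P') (h2 : LTS CS env Q ⟨B, .constr C'⟩ Q')
      (hs : SideCond CS A B C (.constr C') P' Q') :
      LTS CS env (.par P Q) ⟨A ∪ B, .constr (C ∪ C')⟩ (.par P' Q')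
  | parAskL {P Q P' Q' A B C C' c}
      (h1 : LTS CS env P ⟨A, .constr C⟩ P') (h2 : LTS CS env Q ⟨B, .askA C' c⟩ Q')
      (hs : SideCond CS A B C (.askA C' c) P' Q') :
      LTS CS env (.par P Q) ⟨A ∪ B, .askA (C ∪ C') c⟩ (.par P' Q')
  | parAskR {P Q P' Q' A B C C' c}
      (h1 : LTS CS env P ⟨B, .askA C' c⟩ P') (h2 : LTS CS env Q ⟨A, .constr C⟩ Q')
      (hs : SideCond CS A B C (.askA C' c) Q' P') :
      LTS CS env (.par P Q) ⟨A ∪ B, .askA (C ∪ C') c⟩ (.par P' Q')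
  | parFuseL {P Q P' Q' A B C C' x c}
      (h1 : LTS CS env P ⟨A, .constr C⟩ P') (h2 : LTS CS env Q ⟨B, .fuseA C' x c⟩ Q')
      (hs : SideCond CS A B C (.fuseA C' x c) P' Q') :
      LTS CS env (.par P Q) ⟨A ∪ B, .fuseA (C ∪ C') x c⟩ (.par P' Q')
  | parFuseR {P Q P' Q' A B C C' x c}
      (h1 : LTS CS env P ⟨B, .fuseA C' x c⟩ P') (h2 : LTS CS env Q ⟨A, .constr C⟩ Q')
      (hs : SideCond CS A B C (.fuseA C' x c) Q' P') :
      LTS CS env (.par P Q) ⟨A ∪ B, .fuseA (C ∪ C') x c⟩ (.par P' Q')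
  | parJoinL {P Q P' Q' A B C C' x c}
      (h1 : LTS CS env P ⟨A, .constr C⟩ P') (h2 : LTS CS env Q ⟨B, .joinA C' x c⟩ Q')
      (hs : SideCond CS A B C (.joinA C' x c) P' Q') :
      LTS CS env (.par P Q) ⟨A ∪ B, .joinA (C ∪ C') x c⟩ (.par P' Q')
  | parJoinR {P Q P' Q' A B C C' x c}
      (h1 : LTS CS env P ⟨B, .joinA C' x c⟩ P') (h2 : LTS CS env Q ⟨A, .constr C⟩ Q')
      (hs : SideCond CS A B C (.joinA C' x c) Q' P') :
      LTS CS env (.par P Q) ⟨A ∪ B, .joinA (C ∪ C') x c⟩ (.par P' Q')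
  | parCheckL {P Q P' Q' A B C C'}
      (h1 : LTS CS env P ⟨A, .constr C⟩ P') (h2 : LTS CS env Q ⟨B, .checkA C'⟩ Q')
      (hs : SideCond CS A B C (.checkA C') P' Q') :
      LTS CS env (.par P Q) ⟨A ∪ B, .checkA (C ∪ C')⟩ (.par P' Q')
  | parCheckR {P Q P' Q' A B C C'}
      (h1 : LTS CS env P ⟨B, .checkA C'⟩ P') (h2 : LTS CS env Q ⟨A, .constr C⟩ Q')
      (hs : SideCond CS A B C (.checkA C') Q' P') :
      LTS CS env (.par P Q) ⟨A ∪ B, .checkA (C ∪ C')⟩ (.par P' Q')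
  | parTauL {P P' Q} (h : LTS CS env P ⟨∅, .tau⟩ P') :
      LTS CS env (.par P Q) ⟨∅, .tau⟩ (.par P' Q)
  | parTauR {P Q Q'} (h : LTS CS env Q ⟨∅, .tau⟩ Q') :
      LTS CS env (.par P Q) ⟨∅, .tau⟩ (.par P Q')
  | sumL {P Q α P'} (h : LTS CS env P α P') (hP : IsSum P)
      (hn : ∀ C, α.base ≠ .constr C) : LTS CS env (.choice P Q) α P'
  | sumR {P Q α Q'} (h : LTS CS env Q α Q') (hQ : IsSum Q)
      (hn : ∀ C, α.base ≠ .constr C) : LTS CS env (.choice P Q) α Q'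
  | defC {X args α P'} (h : LTS CS env (unfoldConst CS env X args) α P') :
      LTS CS env (.const X args) α P'
  | del {P α P' a} (h : LTS CS env P α P') (ha : a ∉ α.fa CS) :
      LTS CS env (.delim a P) α (.delim a P')
  | openB {P P' a} {A : Finset Atom} {β : BAct CS.D} (h : LTS CS env P ⟨A, β⟩ P') :
      LTS CS env (.delim a P) ⟨insert a A, β⟩ P'
  | closeAsk {P P'} {A : Finset Atom} {C : Set CS.D} {c}
      (h : LTS CS env P ⟨A, .askA C c⟩ P') (he : CS.entails C c) :
      LTS CS env P ⟨∅, .tau⟩ (delims A.toList P')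
  | closeFuse {P P'} {A : Finset Atom} {C : Set CS.D} {x c}
      (h : LTS CS env P ⟨A, .fuseA C x c⟩ P')
      (vs : Finset Var) (hx : x ∈ vs) (hvs : ∀ v ∈ vs, (Sum.inr v : Atom) ∈ A)
      (n : Name)
      (hfresh : (Sum.inl n : Atom) ∉ P'.free CS ∧ (Sum.inl n : Atom) ∉ setFv CS C ∧
        (Sum.inl n : Atom) ∉ CS.fv c ∧ (Sum.inl n : Atom) ∉ A)
      (hloc : CS.LocMinFusion C vs n c) :
      LTS CS env P ⟨∅, .tau⟩
        (delims (Sum.inl n :: (A \ vs.image (Sum.inr : Var → Atom)).toList)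
          (P'.subst CS (fuseSubst vs n)))
  | closeJoin {P P'} {A : Finset Atom} {C : Set CS.D} {x c} {n : Name}
      (h : LTS CS env P ⟨A, .joinA C x c⟩ P')
      (hx : (Sum.inr x : Atom) ∈ A) (hn : (Sum.inl n : Atom) ∈ A)
      (he : CS.entails (CS.substSet (singleSubst x n) C) (CS.subst (singleSubst x n) c)) :
      LTS CS env P ⟨∅, .tau⟩
        (delims ((A.erase (Sum.inr x)).toList) (P'.subst CS (singleSubst x n)))
  | alphaC {P Q α P'} (h : AlphaEq CS P Q) (h2 : LTS CS env Q α P') :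
      LTS CS env P α P'

/-- Top-level reduction `↣` ([TopTau] and [TopCheck]). -/
inductive TopRed (CS : ConstraintSystem) (env : Env CS.D) :
    Proc CS.D → Proc CS.D → Prop where
  | topTau {P P'} (h : LTS CS env P ⟨∅, .tau⟩ P') : TopRed CS env P P'
  | topCheck {P P'} {A : Finset Atom} {C : Set CS.D}
      (h : LTS CS env P ⟨A, .checkA C⟩ P') (hc : ¬ CS.entails C CS.bot) :
      TopRed CS env P (delims A.toList P')

/-- `↣`-bisimilarity. -/
def IsBisim (CS : ConstraintSystem) (env : Env CS.D)
    (R : Proc CS.D → Proc CS.D → Prop) : Prop :=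
  (∀ P Q, R P Q → R Q P) ∧
  ∀ P Q, R P Q → ∀ P', TopRed CS env P P' → ∃ Q', TopRed CS env Q Q' ∧ R P' Q'

def Bisimilar (CS : ConstraintSystem) (env : Env CS.D) (P Q : Proc CS.D) : Prop :=
  ∃ R, IsBisim CS env R ∧ R P Q

/-- Renaming of actions (used to quotient by the choice of the fresh fused name). -/
def varOfAtom (x : Var) : Atom → Var
  | .inr v => v
  | .inl _ => x

def BAct.ren (CS : ConstraintSystem) (f : Atom → Atom) : BAct CS.D → BAct CS.D
  | .tau => .tau
  | .constr C => .constr (CS.ren f '' C)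
  | .askA C c => .askA (CS.ren f '' C) (CS.ren f c)
  | .fuseA C x c => .fuseA (CS.ren f '' C) (varOfAtom x (f (.inr x))) (CS.ren f c)
  | .joinA C x c => .joinA (CS.ren f '' C) (varOfAtom x (f (.inr x))) (CS.ren f c)
  | .checkA C => .checkA (CS.ren f '' C)

def Act.ren (CS : ConstraintSystem) (f : Atom → Atom) (α : Act CS.D) : Act CS.D :=
  ⟨α.binders.image f, α.base.ren CS f⟩

end Contracts
namespace Contracts

/-! ### PCL: propositional contract logic -/

inductive PCL (A : Type) : Type where
  | atom (a : A)
  | top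
  | bot
  | and (p q : PCL A)
  | or (p q : PCL A)
  | imp (p q : PCL A)
  | cimp (p q : PCL A)    -- contractual implication ↠

namespace PCL

/-- Hilbert-style provability for PCL: intuitionistic propositional logic
extended with the axioms `⊤ ↠ ⊤`, `(p ↠ p) → p` and
`(p' → p) → (p ↠ q) → (q → q') → (p' ↠ q')`. -/
inductive Proof {A : Type} : Set (PCL A) → PCL A → Prop where
  | ax {Γ : Set (PCL A)} {p} (h : p ∈ Γ) : Proof Γ p
  | mp {Γ} {p q} (h1 : Proof Γ (imp p q)) (h2 : Proof Γ p) : Proof Γ q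
  | axK {Γ} {p q} : Proof Γ (imp p (imp q p))
  | axS {Γ} {p q r} : Proof Γ (imp (imp p (imp q r)) (imp (imp p q) (imp p r)))
  | andI {Γ} {p q} : Proof Γ (imp p (imp q (and p q)))
  | andE1 {Γ} {p q} : Proof Γ (imp (and p q) p)
  | andE2 {Γ} {p q} : Proof Γ (imp (and p q) q)
  | orI1 {Γ} {p q} : Proof Γ (imp p (or p q))
  | orI2 {Γ} {p q} : Proof Γ (imp q (or p q))
  | orE {Γ} {p q r} : Proof Γ (imp (imp p r) (imp (imp q r) (imp (or p q) r)))
  | topI {Γ} : Proof Γ top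
  | botE {Γ} {p} : Proof Γ (imp bot p)
  | cimpTop {Γ} : Proof Γ (cimp top top)
  | cimpFix {Γ} {p} : Proof Γ (imp (cimp p p) p)
  | cimpMono {Γ} {p p' q q'} :
      Proof Γ (imp (imp p' p) (imp (cimp p q) (imp (imp q q') (cimp p' q'))))

end PCL

end Contracts
namespace Contracts

/-! ### PCL formulae over predicates applied to names/variables, as a constraint system -/

def PCL.mapAtoms {A B : Type} (f : A → B) : PCL A → PCL B
  | .atom a => .atom (f a)
  | .top => .top
  | .bot => .bot
  | .and p q => .and (p.mapAtoms f) (q.mapAtoms f)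
  | .or p q => .or (p.mapAtoms f) (q.mapAtoms f)
  | .imp p q => .imp (p.mapAtoms f) (q.mapAtoms f)
  | .cimp p q => .cimp (p.mapAtoms f) (q.mapAtoms f)

/-- Atomic formulae: a predicate applied to a tuple of names/variables. -/
abbrev PAtom (Pred : Type) : Type := Pred × List Atom

/-- PCL formulae over predicates `Pred`. -/
abbrev PForm (Pred : Type) : Type := PCL (PAtom Pred)

def pclFv {Pred : Type} : PForm Pred → Set Atom
  | .atom pa => {a | a ∈ pa.2}
  | .top => ∅
  | .bot => ∅
  | .and p q => pclFv p ∪ pclFv q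
  | .or p q => pclFv p ∪ pclFv q
  | .imp p q => pclFv p ∪ pclFv q
  | .cimp p q => pclFv p ∪ pclFv q

/-- Predicates occurring in a PCL formula. -/
def pclPreds {Pred : Type} : PForm Pred → Set Pred
  | .atom pa => {pa.1}
  | .top => ∅
  | .bot => ∅
  | .and p q => pclPreds p ∪ pclPreds q
  | .or p q => pclPreds p ∪ pclPreds q
  | .imp p q => pclPreds p ∪ pclPreds q
  | .cimp p q => pclPreds p ∪ pclPreds q

/-- The constraint system whose constraints are PCL formulae over `Pred`,
with entailment given by PCL provability. -/
def pclCS (Pred : Type) : ConstraintSystem where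
  D := PForm Pred
  bot := .bot
  entails := fun C c => PCL.Proof C c
  subst := fun σ => PCL.mapAtoms (fun pa => (pa.1, pa.2.map (substAtom σ)))
  ren := fun f => PCL.mapAtoms (fun pa => (pa.1, pa.2.map f))
  fv := pclFv

/-- Predicates occurring in the constraints of a prefix. -/
def Prefix.predsP {Pred : Type} : Prefix (PForm Pred) → Set Pred
  | .tau => ∅
  | .tell c => pclPreds c
  | .check c => pclPreds c
  | .ask c => pclPreds c
  | .join _ c => pclPreds c
  | .fuse _ c => pclPreds c

/-- Predicates occurring in the constraints of a process. -/
def Proc.preds {Pred : Type} : Proc (PForm Pred) → Set Pred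
  | .nil => ∅
  | .con c => pclPreds c
  | .act π P => π.predsP ∪ P.preds
  | .choice P Q => P.preds ∪ Q.preds
  | .par P Q => P.preds ∪ Q.preds
  | .delim _ P => P.preds
  | .const _ _ => ∅

end Contracts
namespace Contracts
namespace Ring

/-- Binary predicates `f_i` and `s_i` (`i = 1,…,4`, here indexed by `Fin 4`). -/
inductive RPred : Type where
  | f (i : Fin 4)
  | s (i : Fin 4)

abbrev F := PForm RPred

def CS : ConstraintSystem := pclCS RPred

def fP (i : Fin 4) (x t : Atom) : F := .atom (RPred.f i, [x, t])
def sP (i : Fin 4) (x t : Atom) : F := .atom (RPred.s i, [x, t])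

/-- `a_i(n,m,x) = ( f_{i⊞1}(x,m) ∧ s_{i⊟1}(x,n) ) ↠ ( f_i(x,n) ∧ s_i(x,m) )`,
with `⊞, ⊟` addition and subtraction modulo 4. -/
def aC (i : Fin 4) (n m : Name) (x : Atom) : F :=
  .cimp (.and (fP (i + 1) x (.inl m)) (sP (i - 1) x (.inl n)))
        (.and (fP i x (.inl n)) (sP i x (.inl m)))

/-- `f_i(x,n) ∧ s_i(x,m)`, the formula demanded by the `fuse` prefix of `A_i`. -/
def goal (i : Fin 4) (x : Atom) (n m : Name) : F :=
  .and (fP i x (.inl n)) (sP i x (.inl m))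

/-- `A_i(n,m) ≐ (x) tell a_i(n,m,x). fuse_x ( f_i(x,n) ∧ s_i(x,m) ). B_i(x)`,
with bound (session) variable `v` and continuation constant `B` of index `bIdx`. -/
def Aproc (i : Fin 4) (v : Var) (bIdx : ℕ) (n m : Name) : Proc F :=
  .delim (.inr v)
    (.act (.tell (aC i n m (.inr v)))
      (.act (.fuse v (goal i (.inr v) n m)) (.const bIdx [.inr v])))

end Ring
end Contracts

namespace Contracts
namespace Ring

/-- Index `i = j mod 4` of the `j`-th component of the length-8 loop. -/
def m4 (j : Fin 8) : Fin 4 := ⟨j.val % 4, by omega⟩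

/-- The length-8 loop
`P = A₁(n₁,n₂) | A₂(n₂,n₃) | A₃(n₃,n₄) | A₄(n₄,n₅) | A₁(n₅,n₆) | A₂(n₆,n₇) | A₃(n₇,n₈) | A₄(n₈,n₁)`
(the `j`-th component has session variable `j` and continuation constant `(m4 j).val`). -/
def loop8 (ns : Fin 8 → Name) : Proc F :=
  parList (List.ofFn fun j : Fin 8 =>
    Aproc (m4 j) j.val (m4 j).val (ns j) (ns (j + 1)))

/-- The state after the eight-party fusion to the fresh name `m`: all eight
session variables have been instantiated to `m`; the component that fired its
`fuse` prefix proceeds with `B(m)`, the others are left with the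
`ask`-instantiated prefixes `(fuse_x c){m/x} = ask (c{m/x})`. -/
def loop8After (ns : Fin 8 → Name) (m : Name) : Proc F :=
  .delim (.inl m)
    (parList (List.ofFn fun j : Fin 8 =>
      .par (.con (aC (m4 j) (ns j) (ns (j + 1)) (.inl m)))
        (if j = 0 then Proc.const (m4 j).val [.inl m]
         else .act (.ask (goal (m4 j) (.inl m) (ns j) (ns (j + 1))))
                (.const (m4 j).val [.inl m]))))

end Ring
end Contracts

/-!
Eight `tell`s expose the contracts, after which the `fuse` prefix of the first component can
synchronise with all eight of them and fuse the eight session variables to one fresh name. This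
fusion is minimal. Once fused, the contracts form a cycle in which every premise is made of halves
of the two neighbouring promises, and PCL proves all promises of such a family from the fixpoint
axiom `(p ↠ p) → p`. Fusing fewer variables breaks the cycle into a path, and a Gödel-algebra
countermodel ranking the components along the path refutes the goal.
-/

theorem himp_le_of_lt {α : Type*} [CompleteLinearOrder α] {a b : α} (h : b < a) :
    a ⇨ b ≤ b := by
  by_contra hb
  exact (inf_le_iff.mp (himp_inf_le (a := a) (b := b))).elim hb (not_le_of_gt h)

namespace Contracts.PCL

variable {A : Type}

theorem Proof.weaken {Γ Γ' : Set (PCL A)} {p : PCL A} (h : Proof Γ p) (hΓ : Γ ⊆ Γ') :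
    Proof Γ' p := by
  induction h with
  | ax h => exact .ax (hΓ h)
  | mp _ _ ih₁ ih₂ => exact .mp ih₁ ih₂
  | axK => exact .axK
  | axS => exact .axS
  | andI => exact .andI
  | andE1 => exact .andE1
  | andE2 => exact .andE2
  | orI1 => exact .orI1
  | orI2 => exact .orI2
  | orE => exact .orE
  | topI => exact .topI
  | botE => exact .botE
  | cimpTop => exact .cimpTop
  | cimpFix => exact .cimpFix
  | cimpMono => exact .cimpMono

theorem Proof.imp_self {Γ : Set (PCL A)} (p : PCL A) : Proof Γ (imp p p) :=
  .mp (.mp (.axS (q := imp p p)) .axK) .axK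

theorem Proof.deduction {Γ : Set (PCL A)} {p q : PCL A} (h : Proof (insert p Γ) q) :
    Proof Γ (imp p q) := by
  generalize hΔ : insert p Γ = Δ at h
  induction h with
  | ax hq =>
    subst hΔ
    rcases hq with rfl | hq
    · exact .imp_self _
    · exact .mp .axK (.ax hq)
  | mp _ _ ih₁ ih₂ => exact .mp (.mp .axS ih₁) ih₂
  | axK => exact .mp .axK .axK
  | axS => exact .mp .axK .axS
  | andI => exact .mp .axK .andI
  | andE1 => exact .mp .axK .andE1
  | andE2 => exact .mp .axK .andE2
  | orI1 => exact .mp .axK .orI1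
  | orI2 => exact .mp .axK .orI2
  | orE => exact .mp .axK .orE
  | topI => exact .mp .axK .topI
  | botE => exact .mp .axK .botE
  | cimpTop => exact .mp .axK .cimpTop
  | cimpFix => exact .mp .axK .cimpFix
  | cimpMono => exact .mp .axK .cimpMono

theorem Proof.cut {Γ : Set (PCL A)} {p q : PCL A} (h : Proof (insert p Γ) q)
    (hp : Proof Γ p) : Proof Γ q :=
  .mp h.deduction hp

theorem Proof.and_intro {Γ : Set (PCL A)} {p q : PCL A} (hp : Proof Γ p) (hq : Proof Γ q) :
    Proof Γ (and p q) :=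
  .mp (.mp .andI hp) hq

theorem Proof.and_left {Γ : Set (PCL A)} {p q : PCL A} (h : Proof Γ (and p q)) : Proof Γ p :=
  .mp .andE1 h

theorem Proof.and_right {Γ : Set (PCL A)} {p q : PCL A} (h : Proof Γ (and p q)) : Proof Γ q :=
  .mp .andE2 h

/-- `PrePost` turns `p ↠ q` into `q ↠ q`, and `Fix` yields `q`. -/
theorem Proof.of_cimp_of_imp {Γ : Set (PCL A)} {p q : PCL A} (hc : Proof Γ (cimp p q))
    (hqp : Proof Γ (imp q p)) : Proof Γ q :=
  .mp .cimpFix (.mp (.mp (.mp .cimpMono hqp) hc) (.imp_self q))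

theorem Proof.of_cimp_family {ι : Type*} [Finite ι] {Γ : Set (PCL A)} (p q : ι → PCL A)
    (hc : ∀ i, Proof Γ (cimp (p i) (q i)))
    (hpq : ∀ (Δ : Set (PCL A)) i, (∀ j, Proof Δ (q j)) → Proof Δ (p i)) (i : ι) :
    Proof Γ (q i) := by
  have := Fintype.ofFinite ι
  classical
  -- Assuming the promises outside `J`, those in `J` are provable: for a new `k`, assuming
  -- `q k` as well makes every promise, hence `p k`, available, and `of_cimp_of_imp` applies.
  suffices key : ∀ J : Finset ι, ∀ j ∈ J, Proof (Γ ∪ q '' (↑J)ᶜ) (q j) by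
    simpa using key Finset.univ i (Finset.mem_univ i)
  intro J
  induction J using Finset.induction_on with
  | empty => simp
  | insert k J _ ih =>
    set H := Γ ∪ q '' (↑(insert k J))ᶜ
    have hall : ∀ j, Proof (insert (q k) H) (q j) := by
      intro j
      by_cases hjJ : j ∈ J
      · refine (ih j hjJ).weaken ?_
        rintro d (hd | ⟨l, hl, rfl⟩)
        · exact .inr (.inl hd)
        · by_cases hlk : l = k
          · exact hlk ▸ .inl rfl
          · exact .inr (.inr ⟨l, by simpa [hlk] using hl, rfl⟩)
      · by_cases hjk : j = k
        · exact .ax (hjk ▸ .inl rfl)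
        · exact .ax (.inr (.inr ⟨j, by simp [hjk, hjJ], rfl⟩))
    have hk : Proof H (q k) :=
      .of_cimp_of_imp ((hc k).weaken Set.subset_union_left) (hpq _ k hall).deduction
    exact fun j _ => (hall j).cut hk

section Semantics

variable {α : Type*} [HeytingAlgebra α]

def eval (ci : α → α → α) (v : A → α) : PCL A → α
  | atom a => v a
  | top => ⊤
  | bot => ⊥
  | and p q => eval ci v p ⊓ eval ci v q
  | or p q => eval ci v p ⊔ eval ci v q
  | imp p q => eval ci v p ⇨ eval ci v q
  | cimp p q => ci (eval ci v p) (eval ci v q)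

structure IsContractImp (ci : α → α → α) : Prop where
  top_top : ci ⊤ ⊤ = ⊤
  le_self : ∀ a, ci a a ≤ a
  mono : ∀ a a' b b', (a' ⇨ a) ⊓ ci a b ⊓ (b ⇨ b') ≤ ci a' b'

theorem Proof.eval_eq_top {ci : α → α → α} (hci : IsContractImp ci) {Γ : Set (PCL A)}
    {p : PCL A} (h : Proof Γ p) (v : A → α) (hΓ : ∀ d ∈ Γ, eval ci v d = ⊤) :
    eval ci v p = ⊤ := by
  induction h with
  | ax h => exact hΓ _ h
  | mp _ _ ih₁ ih₂ => simp_all [eval]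
  | axS =>
    simp only [eval, himp_eq_top_iff, le_himp_iff]
    exact le_trans (le_inf (le_trans (inf_le_inf_right _ inf_le_left) himp_inf_le)
      (le_trans (inf_le_inf_right _ inf_le_right) himp_inf_le)) himp_inf_le
  | orE =>
    simp only [eval, himp_eq_top_iff, le_himp_iff]
    rw [← sup_himp_distrib]
    exact himp_inf_le
  | cimpTop => exact hci.top_top
  | cimpFix => simpa [eval] using hci.le_self _
  | cimpMono => simpa [eval, le_himp_iff, inf_assoc] using hci.mono _ _ _ _
  | _ => simp [eval, le_himp_iff]

end Semantics

theorem isContractImp_ite {α : Type*} [CompleteLinearOrder α] :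
    IsContractImp (fun a b : α => if a < b then ⊤ else b) where
  top_top := if_neg (lt_irrefl _)
  le_self a := (if_neg (lt_irrefl a)).le
  mono a a' b b' := by
    split_ifs with hab ha'b'
    · exact le_top
    · rw [inf_top_eq]
      rcases le_or_gt b b' with hbb' | hbb'
      · exact inf_le_of_left_le ((himp_le_of_lt (by order)).trans (by order))
      · exact inf_le_of_right_le (himp_le_of_lt hbb')
    · exact le_top
    · rw [inf_assoc]
      exact inf_le_of_right_le inf_himp_le

end Contracts.PCL

namespace Contracts

open Relation

theorem eq_of_fuseSubst_eq_inr {W : Finset Var} {m : Name} {x y : Var}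
    (h : fuseSubst W m x = .inr y) : x = y := by
  unfold fuseSubst at h
  split_ifs at h
  exact Sum.inr.inj h

variable {CS : ConstraintSystem} {env : Env CS.D}

@[simp] theorem parList_nil : parList ([] : List (Proc CS.D)) = .nil := rfl

@[simp] theorem parList_cons (P : Proc CS.D) (l : List (Proc CS.D)) :
    parList (P :: l) = .par P (parList l) := rfl

theorem free_act_fuse (x : Var) (g : CS.D) (K : Proc CS.D) :
    (Proc.act (.fuse x g) K).free CS = insert (.inr x) (CS.fv g) ∪ K.free CS := rfl

theorem mem_free_parList {a : Atom} {l : List (Proc CS.D)} :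
    a ∈ (parList l).free CS ↔ ∃ P ∈ l, a ∈ P.free CS := by
  induction l with
  | nil => simp [parList, Proc.free]
  | cons P l ih => simp [Proc.free, ih]

theorem LTS.delim_tell (a : Atom) (c : CS.D) (P : Proc CS.D) :
    LTS CS env (.delim a (.act (.tell c) P)) ⟨∅, .tau⟩ (.delim a (.par (.con c) P)) :=
  .del .tellA (by simp [Act.fa, BAct.fa])

theorem LTS.reflTransGen_parList_ofFn {n : ℕ} {f g : Fin n → Proc CS.D}
    (h : ∀ j, LTS CS env (f j) ⟨∅, .tau⟩ (g j)) :
    ReflTransGen (fun P Q => LTS CS env P ⟨∅, .tau⟩ Q)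
      (parList (.ofFn f)) (parList (.ofFn g)) := by
  induction n with
  | zero => simp only [List.ofFn_zero]; exact .refl
  | succ n ih =>
    rw [List.ofFn_succ, List.ofFn_succ]
    exact .head (.parTauL (h 0)) ((ih fun j => h j.succ).lift _ fun _ _ => .parTauR)

theorem LTS.delim_con_idle (x : Var) (c : CS.D) {S : Proc CS.D} (hS : IsSum S) :
    LTS CS env (.delim (.inr x) (.par (.con c) S)) ⟨{.inr x}, .constr {c}⟩
      (.par (.con c) S) := by
  simpa using (LTS.parConstr (env := env) .constrA (.idleSum hS)
    ⟨by simp, by simp⟩).openB (a := .inr x)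

theorem LTS.delim_con_fuse (x : Var) (c g : CS.D) (K : Proc CS.D) :
    LTS CS env (.delim (.inr x) (.par (.con c) (.act (.fuse x g) K))) ⟨{.inr x}, .fuseA {c} x g⟩
      (.par (.con c) K) := by
  simpa using (LTS.parFuseL (env := env) .constrA .fuseA ⟨by simp, by simp⟩).openB (a := .inr x)

section Components

variable {n : ℕ} {v : Fin n → Var} {c : Fin n → CS.D} {S : Fin n → Proc CS.D}

theorem inr_notMem_of_ne (hv : Function.Injective v)
    (hfree : ∀ j, Sum.inr ⁻¹' (CS.fv (c j) ∪ (S j).free CS) ⊆ {v j}) {j k : Fin n}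
    (hjk : j ≠ k) :
    Sum.inr (v j) ∉ CS.fv (c k) ∪ (S k).free CS :=
  fun h => hjk (hv (hfree k h))

theorem inr_head_notMem_tail {v : Fin (n + 1) → Var} {c : Fin (n + 1) → CS.D}
    {S : Fin (n + 1) → Proc CS.D} (hv : Function.Injective v)
    (hfree : ∀ j, Sum.inr ⁻¹' (CS.fv (c j) ∪ (S j).free CS) ⊆ {v j}) :
    Sum.inr (v 0) ∉ setFv CS (Set.range fun j : Fin n => c j.succ) ∧
      Sum.inr (v 0) ∉
        (parList (.ofFn fun j : Fin n => .par (.con (c j.succ)) (S j.succ))).free CS := by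
  refine ⟨?_, ?_⟩
  · simp only [setFv, Set.mem_range, Set.iUnion_exists, Set.iUnion_iUnion_eq', Set.mem_iUnion,
      not_exists]
    exact fun j h => inr_notMem_of_ne hv hfree (Fin.succ_ne_zero j).symm (.inl h)
  · simp only [mem_free_parList, List.mem_ofFn, not_exists, not_and, forall_exists_index]
    rintro _ j rfl
    exact inr_notMem_of_ne hv hfree (Fin.succ_ne_zero j).symm

theorem LTS.parList_constr (hv : Function.Injective v) (hS : ∀ j, IsSum (S j))
    (hfree : ∀ j, Sum.inr ⁻¹' (CS.fv (c j) ∪ (S j).free CS) ⊆ {v j}) :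
    LTS CS env (parList (.ofFn fun j => .delim (.inr (v j)) (.par (.con (c j)) (S j))))
      ⟨(Finset.univ.image v).image .inr, .constr (Set.range c)⟩
      (parList (.ofFn fun j => .par (.con (c j)) (S j))) := by
  induction n with
  | zero => simpa using LTS.idleSum (env := env) (P := .nil) trivial
  | succ n ih =>
    have hs : SideCond CS {.inr (v 0)} ((Finset.univ.image fun j : Fin n => v j.succ).image .inr)
        {c 0} (.constr (Set.range fun j : Fin n => c j.succ)) (.par (.con (c 0)) (S 0))
        (parList (.ofFn fun j : Fin n => .par (.con (c j.succ)) (S j.succ))) := by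
      refine ⟨?_, ?_⟩
      · simp only [Finset.mem_singleton, forall_eq]
        exact ⟨by simp [hv.eq_iff], inr_head_notMem_tail hv hfree⟩
      · simp only [Finset.mem_image, Finset.mem_univ, true_and]
        rintro _ ⟨_, ⟨j, rfl⟩, rfl⟩
        have h := inr_notMem_of_ne hv hfree (Fin.succ_ne_zero j)
        exact ⟨by simpa [setFv] using fun h' => h (.inl h'), h⟩
    have := LTS.parConstr (LTS.delim_con_idle (env := env) (v 0) (c 0) (hS 0))
      (ih (hv.comp (Fin.succ_injective _)) (fun j => hS j.succ) (fun j => hfree j.succ)) hs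
    rw [List.ofFn_succ, List.ofFn_succ, parList_cons, parList_cons]
    convert this using 3 <;> ext <;> simp [Fin.exists_fin_succ, eq_comm]

end Components

theorem LTS.parList_fuseA {n : ℕ} {v : Fin (n + 1) → Var} (hv : Function.Injective v)
    {c : Fin (n + 1) → CS.D} {S : Fin (n + 1) → Proc CS.D} {g : CS.D} {K : Proc CS.D}
    (hS₀ : S 0 = .act (.fuse (v 0) g) K) (hS : ∀ j : Fin n, IsSum (S j.succ))
    (hfree : ∀ j, Sum.inr ⁻¹' (CS.fv (c j) ∪ (S j).free CS) ⊆ {v j}) :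
    LTS CS env (parList (.ofFn fun j => .delim (.inr (v j)) (.par (.con (c j)) (S j))))
      ⟨(Finset.univ.image v).image .inr, .fuseA (Set.range c) (v 0) g⟩
      (.par (.par (.con (c 0)) K)
        (parList (.ofFn fun j : Fin n => .par (.con (c j.succ)) (S j.succ)))) := by
  have hK : CS.fv g ∪ K.free CS ⊆ (S 0).free CS := by
    rw [hS₀, free_act_fuse]; exact Set.union_subset_union_left _ (Set.subset_insert _ _)
  have hs : SideCond CS ((Finset.univ.image fun j : Fin n => v j.succ).image .inr) {.inr (v 0)}
      (Set.range fun j : Fin n => c j.succ) (.fuseA {c 0} (v 0) g)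
      (parList (.ofFn fun j : Fin n => .par (.con (c j.succ)) (S j.succ)))
      (.par (.con (c 0)) K) := by
    refine ⟨?_, by simpa using inr_head_notMem_tail hv hfree⟩
    simp only [Finset.mem_image, Finset.mem_univ, true_and]
    rintro _ ⟨_, ⟨j, rfl⟩, rfl⟩
    have h := inr_notMem_of_ne hv hfree (Fin.succ_ne_zero j)
    refine ⟨by simp [hv.eq_iff], ?_, ?_⟩
    · simp only [BAct.fa, setFv, Set.mem_singleton_iff, Set.iUnion_iUnion_eq_left,
        Set.mem_union, Sum.inr.injEq, hv.eq_iff, Fin.succ_ne_zero, or_false, not_or]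
      exact ⟨fun h' => h (.inl h'), fun h' => h (.inr (hK (.inl h')))⟩
    · simp only [Proc.free, Set.mem_union, not_or]
      exact ⟨fun h' => h (.inl h'), fun h' => h (.inr (hK (.inr h')))⟩
  have := LTS.parFuseR (LTS.delim_con_fuse (env := env) (v 0) (c 0) g K)
    (LTS.parList_constr (hv.comp (Fin.succ_injective _)) hS (fun j => hfree j.succ)) hs
  rw [List.ofFn_succ, parList_cons, hS₀]
  convert this using 3 <;> ext <;> simp [Fin.exists_fin_succ, eq_comm]

theorem LTS.tau_of_fuseA {P P' : Proc CS.D} {vs : Finset Var} {C : Set CS.D} {x : Var}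
    {c : CS.D} (h : LTS CS env P ⟨vs.image .inr, .fuseA C x c⟩ P') (hx : x ∈ vs) {m : Name}
    (hP' : .inl m ∉ P'.free CS) (hC : .inl m ∉ setFv CS C) (hc : .inl m ∉ CS.fv c)
    (hloc : CS.LocMinFusion C vs m c) :
    LTS CS env P ⟨∅, .tau⟩ (.delim (.inl m) (P'.subst CS (fuseSubst vs m))) := by
  simpa [delims] using
    LTS.closeFuse h vs hx (fun _ => Finset.mem_image_of_mem _) m ⟨hP', hC, hc, by simp⟩ hloc

theorem LTS.parList_fuse {n : ℕ} {v : Fin (n + 1) → Var} (hv : Function.Injective v)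
    {c : Fin (n + 1) → CS.D} {S : Fin (n + 1) → Proc CS.D} {g : CS.D} {K : Proc CS.D}
    (hS₀ : S 0 = .act (.fuse (v 0) g) K) (hS : ∀ j : Fin n, IsSum (S j.succ))
    (hfree : ∀ j, Sum.inr ⁻¹' (CS.fv (c j) ∪ (S j).free CS) ⊆ {v j}) {m : Name}
    (hm : ∀ j, .inl m ∉ CS.fv (c j) ∪ (S j).free CS)
    (hloc : CS.LocMinFusion (Set.range c) (Finset.univ.image v) m g) :
    LTS CS env (parList (.ofFn fun j => .delim (.inr (v j)) (.par (.con (c j)) (S j))))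
      ⟨∅, .tau⟩
      (.delim (.inl m) ((Proc.par (.par (.con (c 0)) K)
        (parList (.ofFn fun j : Fin n => .par (.con (c j.succ)) (S j.succ)))).subst CS
          (fuseSubst (Finset.univ.image v) m))) := by
  have hK : CS.fv g ∪ K.free CS ⊆ (S 0).free CS := by
    rw [hS₀, free_act_fuse]; exact Set.union_subset_union_left _ (Set.subset_insert _ _)
  refine (LTS.parList_fuseA hv hS₀ hS hfree).tau_of_fuseA
    (Finset.mem_image_of_mem _ (Finset.mem_univ 0)) ?_ ?_ ?_ hloc
  · simp only [Proc.free, Set.mem_union, mem_free_parList, List.mem_ofFn, not_or]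
    refine ⟨⟨fun h => hm 0 (.inl h), fun h => hm 0 (.inr (hK (.inr h)))⟩, ?_⟩
    rintro ⟨_, ⟨j, rfl⟩, h⟩
    exact hm j.succ h
  · simp only [setFv, Set.mem_range, Set.iUnion_exists, Set.iUnion_iUnion_eq',
      Set.mem_iUnion, not_exists]
    exact fun j h => hm j (.inl h)
  · exact fun h => hm 0 (.inr (hK (.inl h)))

end Contracts

namespace Contracts.Ring

variable {i : Fin 4} {n n' : Name} {x : Atom}

def premise (i : Fin 4) (n n' : Name) (x : Atom) : F :=
  .and (fP (i + 1) x (.inl n')) (sP (i - 1) x (.inl n))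

theorem subst_aC (σ : Subst) : CS.subst σ (aC i n n' x) = aC i n n' (substAtom σ x) := rfl

theorem subst_goal (σ : Subst) : CS.subst σ (goal i x n n') = goal i (substAtom σ x) n n' := rfl

theorem mem_fv_aC {a : Atom} (h : a ∈ CS.fv (aC i n n' x)) :
    a = x ∨ a = .inl n ∨ a = .inl n' := by
  simp only [CS, pclCS, aC, fP, sP, pclFv] at h
  aesop

theorem mem_fv_goal {a : Atom} (h : a ∈ CS.fv (goal i x n n')) :
    a = x ∨ a = .inl n ∨ a = .inl n' := by
  simp only [CS, pclCS, goal, fP, sP, pclFv] at h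
  aesop

theorem m4_add_one : ∀ j : Fin 8, m4 (j + 1) = m4 j + 1 := by decide

theorem m4_sub_one : ∀ j : Fin 8, m4 (j - 1) = m4 j - 1 := by decide

variable (ns : Fin 8 → Name)

def loopContract (j : Fin 8) : F := aC (m4 j) (ns j) (ns (j + 1)) (.inr j.val)

def loopGoal (j : Fin 8) : F := goal (m4 j) (.inr j.val) (ns j) (ns (j + 1))

def loopPending (j : Fin 8) : Proc F :=
  .act (.fuse j.val (loopGoal ns j)) (.const (m4 j).val [.inr j.val])

def loop8Told : Proc F :=
  parList (.ofFn fun j => .delim (.inr j.val) (.par (.con (loopContract ns j)) (loopPending ns j)))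

theorem mem_free_loopComponent {j : Fin 8} {a : Atom}
    (h : a ∈ CS.fv (loopContract ns j) ∪ (loopPending ns j).free CS) :
    a = .inr j.val ∨ a = .inl (ns j) ∨ a = .inl (ns (j + 1)) := by
  simp only [loopPending, Proc.free, Prefix.fvP, Set.mem_union, Set.mem_insert_iff,
    Set.mem_ofPred_eq, List.mem_singleton] at h
  rcases h with h | (h | h) | h
  · exact mem_fv_aC h
  · exact .inl h
  · exact mem_fv_goal h
  · exact .inl h

theorem reflTransGen_loop8_loop8Told (env : Env F) :
    Relation.ReflTransGen (TopRed CS env) (loop8 ns) (loop8Told ns) :=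
  Relation.ReflTransGen.mono (fun _ _ => TopRed.topTau) _ _
    (LTS.reflTransGen_parList_ofFn fun _ => LTS.delim_tell _ _ _)

/-- Each premise is the conjunction of halves of the two neighbouring promises. -/
theorem entails_subst_loopGoal {σ : Subst} {y : Atom} (hσ : ∀ j : Fin 8, σ j.val = y) :
    CS.entails (CS.substSet σ (Set.range (loopContract ns))) (CS.subst σ (loopGoal ns 0)) := by
  have hc : ∀ j, PCL.Proof (CS.substSet σ (Set.range (loopContract ns)))
      (.cimp (premise (m4 j) (ns j) (ns (j + 1)) y) (goal (m4 j) y (ns j) (ns (j + 1)))) :=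
    fun j => .ax ⟨loopContract ns j, ⟨j, rfl⟩,
      by rw [loopContract, subst_aC]; exact congrArg _ (hσ j)⟩
  rw [loopGoal, subst_goal, substAtom, hσ 0]
  refine PCL.Proof.of_cimp_family _ _ hc (fun Δ j hq => ?_) 0
  have h₁ := (hq (j + 1)).and_left
  have h₂ := (hq (j - 1)).and_right
  rw [m4_add_one] at h₁
  rw [m4_sub_one, sub_add_cancel] at h₂
  exact h₁.and_intro h₂

section Countermodel

variable {W : Finset Var} {m : Name}

def promiseAtom (W : Finset Var) (m : Name) (k : Fin 8) : PAtom RPred :=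
  (.s (m4 k), [fuseSubst W m k.val, .inl (ns (k + 1))])

def premiseAtom (W : Finset Var) (m : Name) (j : Fin 8) : PAtom RPred :=
  (.s (m4 j - 1), [fuseSubst W m j.val, .inl (ns j)])

def breakRank (j₀ k : Fin 8) : ℕ∞ := ((k - j₀ : Fin 8).val + 1 : ℕ)

theorem promiseAtom_injective (hns : Function.Injective ns) :
    Function.Injective (promiseAtom ns W m) := fun k l hkl => by
  simp only [promiseAtom, Prod.mk.injEq, List.cons.injEq, Sum.inl.injEq] at hkl
  exact add_right_cancel (hns hkl.2.2.1)

/-- A premise atom is a promise atom only when it is that of the predecessor, fused alike;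
the unfused `j₀` has no such predecessor, and elsewhere the rank drops towards `j₀`. -/
theorem extend_premiseAtom_lt (hns : Function.Injective ns) {j₀ : Fin 8} (hj₀ : j₀.val ∉ W)
    (j : Fin 8) :
    Function.extend (promiseAtom ns W m) (breakRank j₀) ⊥ (premiseAtom ns W m j) <
      breakRank j₀ j := by
  by_cases hk : ∃ k, promiseAtom ns W m k = premiseAtom ns W m j
  · obtain ⟨k, hk⟩ := hk
    simp only [promiseAtom, premiseAtom, Prod.mk.injEq, List.cons.injEq, Sum.inl.injEq] at hk
    obtain ⟨-, hfused, hkj, -⟩ := hk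
    have hkj := hns hkj
    subst hkj
    have hsucc : ∀ k : Fin 8, k + 1 ≠ k := by decide
    have hlt : ∀ k j₀ : Fin 8, k + 1 ≠ j₀ → (k - j₀).val < (k + 1 - j₀).val := by
      decide
    have hk₀ : k + 1 ≠ j₀ := by
      rintro rfl
      exact hsucc k (Fin.val_injective (eq_of_fuseSubst_eq_inr (hfused.trans (if_neg hj₀)))).symm
    rw [show premiseAtom ns W m (k + 1) = promiseAtom ns W m k by
        simp [premiseAtom, promiseAtom, hfused, m4_add_one],
      (promiseAtom_injective ns hns).extend_apply]
    exact Nat.cast_lt.mpr (Nat.succ_lt_succ (hlt k j₀ hk₀))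
  · rw [Function.extend_apply' _ _ _ hk]
    exact bot_lt_iff_ne_bot.mpr (by simp [breakRank])

/-- In `ℕ∞`, with all `f`-atoms true and each promise atom valued by its distance from the
unfused `j₀`, every contract holds (its premise lies strictly below its promise) but the goal
does not. -/
theorem not_entails_subst_loopGoal (hns : Function.Injective ns) {j₀ : Fin 8}
    (hj₀ : j₀.val ∉ W) :
    ¬ CS.entails (CS.substSet (fuseSubst W m) (Set.range (loopContract ns)))
        (CS.subst (fuseSubst W m) (loopGoal ns 0)) := by
  intro h
  let rank := Function.extend (promiseAtom ns W m) (breakRank j₀) ⊥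
  let val : PAtom RPred → ℕ∞ := fun a => match a.1 with
    | .f _ => ⊤
    | .s _ => rank a
  have hval : ∀ k, val (promiseAtom ns W m k) = breakRank j₀ k :=
    (promiseAtom_injective ns hns).extend_apply _ _
  have hΓ : ∀ d ∈ CS.substSet (fuseSubst W m) (Set.range (loopContract ns)),
      PCL.eval (fun a b : ℕ∞ => if a < b then ⊤ else b) val d = ⊤ := by
    rintro _ ⟨_, ⟨j, rfl⟩, rfl⟩
    change (if ⊤ ⊓ rank (premiseAtom ns W m j) < ⊤ ⊓ val (promiseAtom ns W m j) then ⊤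
      else ⊤ ⊓ val (promiseAtom ns W m j)) = ⊤
    rw [top_inf_eq, top_inf_eq, hval, if_pos (extend_premiseAtom_lt ns hns hj₀ j)]
  have hgoal := PCL.Proof.eval_eq_top PCL.isContractImp_ite h val hΓ
  change ⊤ ⊓ val (promiseAtom ns W m 0) = ⊤ at hgoal
  rw [top_inf_eq, hval] at hgoal
  exact ENat.natCast_ne_top _ hgoal

end Countermodel

theorem minFusion_loop (hns : Function.Injective ns) (m : Name) :
    CS.MinFusion (Set.range (loopContract ns)) (Finset.range 8) m (loopGoal ns 0) := by
  refine ⟨entails_subst_loopGoal ns fun j => if_pos (Finset.mem_range.mpr j.isLt),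
    fun W hW => ?_⟩
  obtain ⟨x, hx, hxW⟩ := Finset.exists_of_ssubset hW
  exact not_entails_subst_loopGoal ns hns (j₀ := ⟨x, Finset.mem_range.mp hx⟩) hxW

theorem loop8Told_tau_loop8After (env : Env F) (hns : Function.Injective ns) {m : Name}
    (hm : ∀ j, m ≠ ns j) : LTS CS env (loop8Told ns) ⟨∅, .tau⟩ (loop8After ns m) := by
  have hfree :
      ∀ j, .inr ⁻¹' (CS.fv (loopContract ns j) ∪ (loopPending ns j).free CS) ⊆ {j.val} :=
    fun j y hy => by simpa using mem_free_loopComponent ns hy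
  have hfresh : ∀ j, .inl m ∉ CS.fv (loopContract ns j) ∪ (loopPending ns j).free CS :=
    fun j hy => by rcases mem_free_loopComponent ns hy with h | h | h <;> simp_all
  have h := LTS.parList_fuse (CS := CS) (env := env) (c := loopContract ns)
    (S := loopPending ns) Fin.val_injective rfl (fun _ => trivial) hfree hfresh
    ⟨_, subset_rfl, Finset.image_fin_univ ▸ minFusion_loop ns hns m⟩
  rw [Finset.image_fin_univ] at h
  -- `loop8After ns m` is the fused state with the substitution carried out
  exact h

end Contracts.Ring

open Contracts Contracts.Ring

/-- The encoding of the ring-to-star rule admits spurious rewritings on an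
8-cycle: for pairwise distinct names `n₁,…,n₈`, the length-8 loop `P` can
perform a `↣`-transition in which all eight session variables are fused to a
single fresh name `m`. -/
theorem loop8_spurious_rewriting (env : Env Ring.F) (ns : Fin 8 → Name)
    (hdist : Function.Injective ns) :
    ∃ m : Name, (∀ j : Fin 8, m ≠ ns j) ∧
      ∃ T U : Proc Ring.F,
        Relation.ReflTransGen (TopRed Ring.CS env) (loop8 ns) T ∧
        TopRed Ring.CS env T U ∧
        StructEq Ring.CS env U (loop8After ns m) := by
  obtain ⟨m, hm⟩ := Infinite.exists_notMem_finset (Finset.univ.image ns)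
  have hm' : ∀ j, m ≠ ns j := fun j h =>
    hm (h ▸ Finset.mem_image_of_mem ns (Finset.mem_univ j))
  exact ⟨m, hm', loop8Told ns, loop8After ns m, reflTransGen_loop8_loop8Told ns env,
    .topTau (loop8Told_tau_loop8After ns env hdist hm'), .refl _⟩
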